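/- For all integers m, n ≥ 1, for all indices 1 ≤ i ≤ m and 1 ≤ j ≤ n and all elements X, Y of the monoid G⁺_{m,n}: if t_i·X = u_j·Y in G⁺_{m,n}, then there exists Z ∈ G⁺_{m,n} with X = u_j·Z and Y = t_i·Z. -/

import Mathlib

/-!
Erasing the letters of one side (the `u j`, resp. the `t i`) gives homomorphisms from `G⁺_{m,n}`
to the monoids presented by the rotations of `s·t_1⋯t_m`, resp. of `s·u_1⋯u_n`, alone. Since
every `t i` commutes with every `u j`, the two projections together are injective: a rotation on
one side can be performed inside any word with the given projection, once the letters of the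
other side around its single `s` are moved out of the way. Conversely, a word in `s` and the `t`s
and a word in `s` and the `u`s with the same number of `s`s interleave to a common word. So if
`t_i X = u_j Y`, the element `Z` with the `t`-projection of `X` and the `u`-projection of `Y`
satisfies `X = u_j Z` and `Y = t_i Z`: both sides have the same projections.
-/

namespace Gmn
/-- Generators of `G_{m,n}`: `s`, `t 1, …, t m`, `u 1, …, u n`. -/
inductive Gen (m n : ℕ) : Type
  | s : Gen m n
  | t : Fin m → Gen m n
  | u : Fin n → Gen m n

/-- The word `s · t 1 ⋯ t m`. -/
def wordT (m n : ℕ) : List (Gen m n) := Gen.s :: List.ofFn (fun i => Gen.t i)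

/-- The word `s · u 1 ⋯ u n`. -/
def wordU (m n : ℕ) : List (Gen m n) := Gen.s :: List.ofFn (fun j => Gen.u j)

/-- The word `s · t 1 ⋯ t m · u 1 ⋯ u n`. -/
def wordFull (m n : ℕ) : List (Gen m n) :=
  Gen.s :: (List.ofFn (fun i => Gen.t i) ++ List.ofFn (fun j => Gen.u j))

/-- The defining relations of `G_{m,n}`: all cyclic rotations of `s·t_1⋯t_m` are equal,
all cyclic rotations of `s·u_1⋯u_n` are equal, and `t_i · u_j = u_j · t_i` for all `i, j`. -/
inductive Rel (m n : ℕ) : FreeMonoid (Gen m n) → FreeMonoid (Gen m n) → Prop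
  | rotT (j : ℕ) :
      Rel m n (FreeMonoid.ofList (wordT m n)) (FreeMonoid.ofList ((wordT m n).rotate j))
  | rotU (j : ℕ) :
      Rel m n (FreeMonoid.ofList (wordU m n)) (FreeMonoid.ofList ((wordU m n).rotate j))
  | comm (i : Fin m) (j : Fin n) :
      Rel m n (FreeMonoid.of (Gen.t i) * FreeMonoid.of (Gen.u j))
        (FreeMonoid.of (Gen.u j) * FreeMonoid.of (Gen.t i))

/-- The presented monoid `G⁺_{m,n}`. -/
abbrev GP (m n : ℕ) := PresentedMonoid (Rel m n)

/-- The image of a generator in `G⁺_{m,n}`. -/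
abbrev gen {m n : ℕ} (g : Gen m n) : GP m n := PresentedMonoid.of (Rel m n) g

/-- The element `Δ = s · t_1 ⋯ t_m · u_1 ⋯ u_n` of `G⁺_{m,n}`. -/
def Delta (m n : ℕ) : GP m n :=
  PresentedMonoid.mk (Rel m n) (FreeMonoid.ofList (wordFull m n))

variable {m n : ℕ}

namespace Gen

/-- Sides are booleans: `true` is the side of the letters `t i`, `false` that of the `u j`. -/
def visible (σ : Bool) : Gen m n → Bool
  | .s => true
  | .t _ => σ
  | .u _ => !σ

def isS : Gen m n → Bool
  | .s => true
  | _ => false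

@[simp] lemma visible_s (σ : Bool) : (s : Gen m n).visible σ = true := rfl
@[simp] lemma visible_t (σ : Bool) (i : Fin m) : (t i : Gen m n).visible σ = σ := rfl
@[simp] lemma visible_u (σ : Bool) (j : Fin n) : (u j : Gen m n).visible σ = !σ := rfl
@[simp] lemma isS_s : (s : Gen m n).isS = true := rfl
@[simp] lemma isS_t (i : Fin m) : (t i : Gen m n).isS = false := rfl
@[simp] lemma isS_u (j : Fin n) : (u j : Gen m n).isS = false := rfl

lemma visible_not (σ : Bool) (g : Gen m n) : g.visible (!σ) = (g.isS || !g.visible σ) := by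
  cases g <;> simp

lemma exists_visible (g : Gen m n) : ∃ σ, g.visible σ := by
  cases g
  exacts [⟨true, rfl⟩, ⟨true, rfl⟩, ⟨false, rfl⟩]

lemma isS_eq_false_of_not_visible {σ : Bool} {g : Gen m n} (h : ¬g.visible σ) :
    g.isS = false := by
  cases g <;> simp_all

lemma eq_s_of_isS {g : Gen m n} (h : g.isS) : g = s := by
  cases g <;> simp_all

end Gen

def proj (σ : Bool) (l : List (Gen m n)) : List (Gen m n) := l.filter (Gen.visible σ)

@[simp] lemma proj_nil (σ : Bool) : proj σ ([] : List (Gen m n)) = [] := rfl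

@[simp] lemma proj_cons (σ : Bool) (g : Gen m n) (l : List (Gen m n)) :
    proj σ (g :: l) = if g.visible σ then g :: proj σ l else proj σ l :=
  List.filter_cons

@[simp] lemma proj_append (σ : Bool) (a b : List (Gen m n)) :
    proj σ (a ++ b) = proj σ a ++ proj σ b :=
  List.filter_append ..

lemma proj_eq_nil {σ : Bool} {l : List (Gen m n)} (h : ∀ g ∈ l, ¬g.visible σ) :
    proj σ l = [] :=
  List.filter_eq_nil_iff.2 h

lemma proj_not_eq_self {σ : Bool} {l : List (Gen m n)} (h : ∀ g ∈ l, ¬g.visible σ) :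
    proj (!σ) l = l :=
  List.filter_eq_self.2 fun g hg => by simp [Gen.visible_not, h g hg]

def countS (l : List (Gen m n)) : ℕ := l.countP Gen.isS

@[simp] lemma countS_proj (σ : Bool) (l : List (Gen m n)) : countS (proj σ l) = countS l := by
  rw [countS, proj, List.countP_filter]
  congr 1
  funext g
  cases g <;> simp

def sideWord : Bool → List (Gen m n)
  | true => wordT m n
  | false => wordU m n

lemma visible_of_mem_sideWord {σ : Bool} {g : Gen m n} (h : g ∈ sideWord σ) : g.visible σ := by
  cases σ <;> simp only [sideWord, wordT, wordU, List.mem_cons, List.mem_ofFn] at h <;>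
    rcases h with rfl | ⟨_, rfl⟩ <;> rfl

lemma proj_sideWord_rotate (σ : Bool) (p : ℕ) :
    proj σ ((sideWord σ).rotate p) = ((sideWord σ).rotate p : List (Gen m n)) :=
  List.filter_eq_self.2 fun _ hg => visible_of_mem_sideWord (List.mem_rotate.1 hg)

lemma proj_not_sideWord_rotate (σ : Bool) (p : ℕ) :
    proj (!σ) ((sideWord σ).rotate p) = [(Gen.s : Gen m n)] := by
  have h : proj (!σ) (sideWord σ : List (Gen m n)) = [.s] := by
    cases σ <;> simp only [sideWord, wordT, wordU, proj_cons, Gen.visible_s, if_true] <;>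
      exact congrArg _ (proj_eq_nil fun g hg => by obtain ⟨_, rfl⟩ := List.mem_ofFn.1 hg; simp)
  exact List.perm_singleton.1 (h ▸ ((sideWord σ).rotate_perm p).filter _)

def toGP (l : List (Gen m n)) : GP m n := PresentedMonoid.mk _ (FreeMonoid.ofList l)

@[simp] lemma toGP_nil : toGP ([] : List (Gen m n)) = 1 := rfl

@[simp] lemma toGP_cons (g : Gen m n) (l : List (Gen m n)) : toGP (g :: l) = gen g * toGP l := by
  rw [toGP, FreeMonoid.ofList_cons, map_mul]
  rfl

@[simp] lemma toGP_append (a b : List (Gen m n)) : toGP (a ++ b) = toGP a * toGP b := by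
  rw [toGP, FreeMonoid.ofList_append, map_mul]
  rfl

lemma toGP_surjective : Function.Surjective (toGP : List (Gen m n) → GP m n) := fun X => by
  obtain ⟨x, rfl⟩ := PresentedMonoid.surjective_mk X
  exact ⟨x.toList, rfl⟩

lemma toGP_sideWord_rotate (σ : Bool) (p : ℕ) :
    toGP ((sideWord σ).rotate p) = (toGP (sideWord σ) : GP m n) := by
  cases σ
  exacts [(PresentedMonoid.mk_eq_mk_of_rel (Rel.rotU p)).symm,
    (PresentedMonoid.mk_eq_mk_of_rel (Rel.rotT p)).symm]

lemma commute_gen_t_u (i : Fin m) (j : Fin n) : Commute (gen (.t i)) (gen (.u j)) := by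
  have h := PresentedMonoid.mk_eq_mk_of_rel (Rel.comm i j)
  rwa [map_mul, map_mul] at h

lemma commute_gen {σ : Bool} {g h : Gen m n} (hg : ¬g.visible σ) (hh : h.visible σ)
    (hs : h.isS = false) : Commute (gen g) (gen h) := by
  cases g <;> cases h <;> cases σ <;> simp_all
  exacts [commute_gen_t_u _ _, (commute_gen_t_u _ _).symm]

lemma commute_toGP {σ : Bool} {μ : List (Gen m n)} {h : Gen m n}
    (hμ : ∀ g ∈ μ, ¬g.visible σ) (hh : h.visible σ) (hs : h.isS = false) :
    Commute (toGP μ) (gen h) := by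
  induction μ with
  | nil => exact Commute.one_left _
  | cons g μ ih =>
    rw [toGP_cons]
    exact (commute_gen (hμ g (by simp)) hh hs).mul_left (ih fun g hg => hμ g (by simp [hg]))

theorem toGP_eq_of_proj_eq {a b : List (Gen m n)} (h : ∀ σ, proj σ a = proj σ b) :
    toGP a = toGP b := by
  induction a generalizing b with
  | nil =>
    cases b with
    | nil => rfl
    | cons g b =>
      obtain ⟨σ, hσ⟩ := g.exists_visible
      simpa [hσ] using h σ
  | cons g a ih =>
    obtain ⟨σ, hσ⟩ := g.exists_visible
    obtain ⟨μ, b, rfl, hμ, -, hb⟩ :=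
      List.filter_eq_cons_iff.1 (by simpa [proj, hσ] using (h σ).symm)
    change proj σ b = proj σ a at hb
    have hμs : g.isS → μ = [] := fun hs => by
      cases μ with
      | nil => rfl
      | cons x μ =>
        have hx : ¬x.visible σ := hμ x (by simp)
        have hxs := Gen.isS_eq_false_of_not_visible hx
        have hgx := h (!σ)
        rw [Gen.eq_s_of_isS hs] at hgx
        simp [Gen.visible_not, hxs, hx] at hgx
        simp [← hgx.1] at hxs
    have hcomm : Commute (toGP μ) (gen g) := by
      cases hs : g.isS
      · exact commute_toGP hμ hσ hs
      · simp [hμs hs]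
    have hrest : ∀ τ, proj τ a = proj τ (μ ++ b) := by
      intro τ
      rcases Bool.eq_or_eq_not τ σ with rfl | rfl
      · simp [proj_eq_nil hμ, hb]
      · have hτ := h (!σ)
        cases hs : g.isS
        · simpa [Gen.visible_not, hs, hσ] using hτ
        · simpa [hμs hs, Gen.visible_not, hs] using hτ
    calc toGP (g :: a) = gen g * toGP (μ ++ b) := by rw [toGP_cons, ih hrest]
      _ = toGP (μ ++ g :: b) := by
        rw [toGP_append, toGP_append, toGP_cons, ← mul_assoc, ← mul_assoc, hcomm.eq]

inductive RotRel (m n : ℕ) (σ : Bool) : FreeMonoid (Gen m n) → FreeMonoid (Gen m n) → Prop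
  | rotate (p : ℕ) : RotRel m n σ (.ofList (sideWord σ)) (.ofList ((sideWord σ).rotate p))

abbrev RotMonoid (m n : ℕ) (σ : Bool) := PresentedMonoid (RotRel m n σ)

def toRot (σ : Bool) (l : List (Gen m n)) : RotMonoid m n σ := PresentedMonoid.mk _ (.ofList l)

@[simp] lemma toRot_cons (σ : Bool) (g : Gen m n) (l : List (Gen m n)) :
    toRot σ (g :: l) = PresentedMonoid.of _ g * toRot σ l := by
  rw [toRot, FreeMonoid.ofList_cons, map_mul]
  rfl

lemma toRot_proj_sideWord_rotate (σ τ : Bool) (p : ℕ) :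
    toRot σ (proj σ ((sideWord τ).rotate p)) =
      (toRot σ (proj σ (sideWord τ)) : RotMonoid m n σ) := by
  rcases Bool.eq_or_eq_not σ τ with rfl | rfl
  · have h := proj_sideWord_rotate (m := m) (n := n) σ 0
    rw [List.rotate_zero] at h
    rw [proj_sideWord_rotate, h]
    exact (PresentedMonoid.mk_eq_mk_of_rel (RotRel.rotate p)).symm
  · have h := proj_not_sideWord_rotate (m := m) (n := n) τ 0
    rw [List.rotate_zero] at h
    rw [proj_not_sideWord_rotate, h]

def projGP (σ : Bool) : GP m n →* RotMonoid m n σ :=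
  PresentedMonoid.lift (fun g => if g.visible σ then PresentedMonoid.of _ g else 1) <| by
    have hlift (l : List (Gen m n)) :
        FreeMonoid.lift (fun g => if g.visible σ then PresentedMonoid.of _ g else 1)
          (.ofList l) = toRot σ (proj σ l) := by
      induction l with
      | nil => rfl
      | cons g l ih => by_cases hg : g.visible σ <;> simp_all [FreeMonoid.lift_ofList]
    intro a b hab
    cases hab with
    | rotT p => rw [hlift, hlift]; exact (toRot_proj_sideWord_rotate σ true p).symm
    | rotU p => rw [hlift, hlift]; exact (toRot_proj_sideWord_rotate σ false p).symm
    | comm i j => cases σ <;> simp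

@[simp] lemma projGP_gen (σ : Bool) (g : Gen m n) :
    projGP σ (gen g) = if g.visible σ then PresentedMonoid.of _ g else 1 := rfl

lemma projGP_toGP (σ : Bool) (l : List (Gen m n)) : projGP σ (toGP l) = toRot σ (proj σ l) := by
  induction l with
  | nil => rfl
  | cons g l ih => by_cases hg : g.visible σ <;> simp [hg, ih]

def ProjLifts (σ : Bool) (x y : List (Gen m n)) : Prop :=
  ∀ a, proj σ a = x → ∃ b, toGP a = toGP b ∧ proj σ b = y ∧ proj (!σ) b = proj (!σ) a

namespace ProjLifts

variable {σ : Bool} {x y z x' y' : List (Gen m n)}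

lemma refl (σ : Bool) (x : List (Gen m n)) : ProjLifts σ x x := fun a ha => ⟨a, rfl, ha, rfl⟩

lemma trans (h : ProjLifts σ x y) (h' : ProjLifts σ y z) : ProjLifts σ x z := fun a ha => by
  obtain ⟨b, hab, hb, hb'⟩ := h a ha
  obtain ⟨c, hbc, hc, hc'⟩ := h' b hb
  exact ⟨c, hab.trans hbc, hc, hc'.trans hb'⟩

lemma append (h : ProjLifts σ x y) (h' : ProjLifts σ x' y') :
    ProjLifts σ (x ++ x') (y ++ y') := fun a ha => by
  obtain ⟨a₁, a₂, rfl, ha₁, ha₂⟩ := List.filter_eq_append_iff.1 ha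
  obtain ⟨b₁, h₁, hb₁, hb₁'⟩ := h a₁ ha₁
  obtain ⟨b₂, h₂, hb₂, hb₂'⟩ := h' a₂ ha₂
  exact ⟨b₁ ++ b₂, by simp [h₁, h₂], by simp [hb₁, hb₂], by simp [hb₁', hb₂']⟩

end ProjLifts

/-- A word `a` projecting onto a rotation of the side word has a single `s`, and the
remaining letters of the other side can be moved out of the way to both ends of `a`. -/
lemma projLifts_sideWord_rotate (σ : Bool) (p q : ℕ) :
    ProjLifts σ ((sideWord σ).rotate p) ((sideWord σ).rotate q : List (Gen m n)) := by
  intro a ha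
  have hcount : countS (proj (!σ) a) = 1 := by
    rw [countS_proj, ← countS_proj σ, ha, ← countS_proj (!σ), proj_not_sideWord_rotate]
    rfl
  obtain ⟨g, hg, hgs⟩ := List.countP_pos_iff.1 (hcount ▸ Nat.one_pos)
  obtain ⟨β₀, β₁, hβ⟩ := List.append_of_mem (Gen.eq_s_of_isS hgs ▸ hg)
  have hβs : ∀ g ∈ β₀ ++ β₁, g.isS = false := by
    rw [hβ, countS, List.countP_append, List.countP_cons_of_pos Gen.isS_s] at hcount
    have h0 : (β₀ ++ β₁).countP Gen.isS = 0 := by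
      rw [List.countP_append]
      omega
    simpa using List.countP_eq_zero.1 h0
  have hinv : ∀ g ∈ β₀ ++ β₁, ¬g.visible σ := by
    intro g hg
    have hvis : g.visible (!σ) := List.of_mem_filter (by rw [← proj, hβ]; simp at hg ⊢; tauto)
    simpa [Gen.visible_not, hβs g hg] using hvis
  have hinv₀ : ∀ g ∈ β₀, ¬g.visible σ := fun g hg => hinv g (by simp [hg])
  have hinv₁ : ∀ g ∈ β₁, ¬g.visible σ := fun g hg => hinv g (by simp [hg])
  have hproj (r : ℕ) : ∀ τ, proj τ (β₀ ++ (sideWord σ).rotate r ++ β₁) =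
      if τ = σ then (sideWord σ).rotate r else proj (!σ) a := by
    intro τ
    rcases Bool.eq_or_eq_not τ σ with rfl | rfl
    · simp [proj_eq_nil hinv₀, proj_eq_nil hinv₁, proj_sideWord_rotate]
    · simp [proj_not_eq_self hinv₀, proj_not_eq_self hinv₁, proj_not_sideWord_rotate, hβ]
  refine ⟨β₀ ++ (sideWord σ).rotate q ++ β₁, ?_, by simpa using hproj q σ,
    by simpa using hproj q (!σ)⟩
  calc toGP a = toGP (β₀ ++ (sideWord σ).rotate p ++ β₁) := toGP_eq_of_proj_eq fun τ => by
        rw [hproj p τ]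
        rcases Bool.eq_or_eq_not τ σ with rfl | rfl
        · simpa using ha
        · simp
    _ = toGP (β₀ ++ (sideWord σ).rotate q ++ β₁) := by
        simp only [toGP_append, toGP_sideWord_rotate]

lemma projLifts_of_conGen {σ : Bool} {x y : FreeMonoid (Gen m n)}
    (h : conGen (RotRel m n σ) x y) :
    ProjLifts σ x.toList y.toList ∧ ProjLifts σ y.toList x.toList := by
  induction h with
  | of x y hxy =>
    cases hxy with
    | rotate p =>
      exact ⟨by simpa using projLifts_sideWord_rotate σ 0 p,
        by simpa using projLifts_sideWord_rotate σ p 0⟩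
  | refl x => exact ⟨.refl σ _, .refl σ _⟩
  | symm _ ih => exact ih.symm
  | trans _ _ ih₁ ih₂ => exact ⟨ih₁.1.trans ih₂.1, ih₂.2.trans ih₁.2⟩
  | mul _ _ ih₁ ih₂ => exact ⟨ih₁.1.append ih₂.1, ih₁.2.append ih₂.2⟩

theorem eq_of_projGP_eq {X Y : GP m n} (h : ∀ σ, projGP σ X = projGP σ Y) : X = Y := by
  obtain ⟨a, rfl⟩ := toGP_surjective X
  obtain ⟨b, rfl⟩ := toGP_surjective Y
  have hlift (σ : Bool) : ProjLifts σ (proj σ a) (proj σ b) := by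
    have hσ := h σ
    rw [projGP_toGP, projGP_toGP] at hσ
    exact (projLifts_of_conGen (PresentedMonoid.mk_eq_mk_iff.1 hσ)).1
  obtain ⟨c, hac, hct, hcu⟩ := hlift true a rfl
  obtain ⟨d, hcd, hdu, hdt⟩ := hlift false c hcu
  refine hac.trans (hcd.trans (toGP_eq_of_proj_eq fun σ => ?_))
  cases σ
  exacts [hdu, hdt.trans hct]

lemma countS_eq_of_toGP_eq {a b : List (Gen m n)} (h : toGP a = toGP b) : countS a = countS b := by
  suffices ∀ x y, conGen (Rel m n) x y → countS x.toList = countS y.toList from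
    this _ _ (PresentedMonoid.mk_eq_mk_iff.1 h)
  intro x y hxy
  induction hxy with
  | of x y hxy =>
    cases hxy with
    | rotT p => exact (((wordT m n).rotate_perm p).countP_eq _).symm
    | rotU p => exact (((wordU m n).rotate_perm p).countP_eq _).symm
    | comm i j => rfl
  | refl => rfl
  | symm _ ih => exact ih.symm
  | trans _ _ ih₁ ih₂ => exact ih₁.trans ih₂
  | mul _ _ ih₁ ih₂ =>
    simp only [FreeMonoid.toList_mul, countS, List.countP_append] at ih₁ ih₂ ⊢
    omega

lemma exists_proj_eq {α β : List (Gen m n)} (hα : ∀ g ∈ α, g.visible true)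
    (hβ : ∀ g ∈ β, g.visible false) (h : countS α = countS β) :
    ∃ z, proj true z = α ∧ proj false z = β := by
  induction α generalizing β with
  | nil =>
    have hβs : ∀ g ∈ β, g.isS = false := by simpa [countS] using h.symm
    refine ⟨β, proj_eq_nil fun g hg => ?_, List.filter_eq_self.2 hβ⟩
    have hgu := hβ g hg
    have hgs := hβs g hg
    cases g <;> simp at hgu hgs ⊢
  | cons g α ih =>
    have hα' : ∀ g ∈ α, g.visible true := fun g hg => hα g (by simp [hg])
    cases g with
    | t i =>
      obtain ⟨z, hz, hz'⟩ := ih hα' hβ (by simpa [countS, List.countP_cons] using h)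
      exact ⟨.t i :: z, by simp [hz], by simp [hz']⟩
    | u j => simp at hα
    | s =>
      induction β with
      | nil => simp [countS] at h
      | cons g β ihβ =>
        have hβ' : ∀ g ∈ β, g.visible false := fun g hg => hβ g (by simp [hg])
        cases g with
        | s =>
          obtain ⟨z, hz, hz'⟩ := ih hα' hβ' (by simpa [countS, List.countP_cons] using h)
          exact ⟨.s :: z, by simp [hz], by simp [hz']⟩
        | u j =>
          obtain ⟨z, hz, hz'⟩ := ihβ hβ' (by simpa [countS, List.countP_cons] using h)
          exact ⟨.u j :: z, by simp [hz], by simp [hz']⟩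
        | t i => simp at hβ

theorem t_mul_eq_u_mul_general (m n : ℕ) :
    ∀ (i : Fin m) (j : Fin n) (X Y : GP m n),
      gen (Gen.t i) * X = gen (Gen.u j) * Y →
      ∃ Z : GP m n, X = gen (Gen.u j) * Z ∧ Y = gen (Gen.t i) * Z := by
  intro i j X Y h
  obtain ⟨x, rfl⟩ := toGP_surjective X
  obtain ⟨y, rfl⟩ := toGP_surjective Y
  have hcount : countS x = countS y := by
    simpa [countS] using countS_eq_of_toGP_eq (a := .t i :: x) (b := .u j :: y) (by simpa using h)
  obtain ⟨z, hzt, hzu⟩ := exists_proj_eq (α := proj true x) (β := proj false y)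
    (fun _ hg => List.of_mem_filter hg) (fun _ hg => List.of_mem_filter hg) (by simpa using hcount)
  have hT : toRot true (proj true y) = .of _ (.t i) * toRot true (proj true x) := by
    simpa [projGP_toGP] using (congrArg (projGP true) h).symm
  have hU : toRot false (proj false x) = .of _ (.u j) * toRot false (proj false y) := by
    simpa [projGP_toGP] using congrArg (projGP false) h
  refine ⟨toGP z, eq_of_projGP_eq fun σ => ?_, eq_of_projGP_eq fun σ => ?_⟩ <;>
    cases σ <;> simp [projGP_toGP, hzt, hzu, hT, hU]

/-- For all `m, n ≥ 1` and all `i, j`, if `t_i·X = u_j·Y` in `G⁺_{m,n}` then there exists `Z`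
with `X = u_j·Z` and `Y = t_i·Z`. -/
theorem t_mul_eq_u_mul (m n : ℕ) (hm : 1 ≤ m) (hn : 1 ≤ n) :
    ∀ (i : Fin m) (j : Fin n) (X Y : GP m n),
      gen (Gen.t i) * X = gen (Gen.u j) * Y →
      ∃ Z : GP m n, X = gen (Gen.u j) * Z ∧ Y = gen (Gen.t i) * Z :=
  t_mul_eq_u_mul_general m n

end Gmn
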